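/- (Theorem 1 of the paper, global case.) If (p*_1,…,p*_{n₂}, Θ*) is a global maximum of L — that is, L(p_1,…,p_{n₂}, Θ) ≤ L(p*_1,…,p*_{n₂}, Θ*) for all probability vectors p_1,…,p_{n₂} on {1,…,G} and all Θ ∈ T — then Θ* is a global maximum of the weighted log-likelihood: ℓ_w(Θ) ≤ ℓ_w(Θ*) for all Θ ∈ T. -/

import Mathlib

open Real Finset

namespace FSC

variable {T : Type*}

/-- Marginal density of the `j`-th unlabelled observation: `m_j(Θ) = ∑_g f²_j(Θ, g)`. -/
noncomputable def marg {G n₂ : ℕ} (f2 : Fin n₂ → T → Fin G → ℝ) (j : Fin n₂) (Θ : T) : ℝ :=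
  ∑ g, f2 j Θ g

/-- Conditional distribution of the latent label: `c_j(Θ)(g) = f²_j(Θ, g) / m_j(Θ)`. -/
noncomputable def condP {G n₂ : ℕ} (f2 : Fin n₂ → T → Fin G → ℝ) (j : Fin n₂) (Θ : T)
    (g : Fin G) : ℝ :=
  f2 j Θ g / marg f2 j Θ

/-- Probability vector on `{1,…,G}`. -/
def IsProbVec {G : ℕ} (p : Fin G → ℝ) : Prop :=
  (∀ g, 0 ≤ p g) ∧ ∑ g, p g = 1

/-- The weighted log-likelihood `ℓ_w(Θ)`. -/
noncomputable def ellw {G n₁ n₂ : ℕ} (f1 : Fin n₁ → T → ℝ) (f2 : Fin n₂ → T → Fin G → ℝ)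
    (z : Fin n₂ → Fin G) (lam : ℝ) (Θ : T) : ℝ :=
  lam * ∑ j, Real.log (f1 j Θ) + (1 - lam) * ∑ j, Real.log (f2 j Θ (z j))

/-- The lower-bound function `L(p_1,…,p_{n₂}, Θ)`.  (If `p j g = 0` the corresponding
term is `0 * Real.log (… / 0) = 0`, matching the paper's convention.) -/
noncomputable def Lfun {G n₁ n₂ : ℕ} (f1 : Fin n₁ → T → ℝ) (f2 : Fin n₂ → T → Fin G → ℝ)
    (z : Fin n₂ → Fin G) (lam : ℝ) (p : Fin n₂ → Fin G → ℝ) (Θ : T) : ℝ :=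
  lam * ∑ j, Real.log (f1 j Θ) +
    (1 - lam) * ∑ j, (Real.log (condP f2 j Θ (z j)) +
      ∑ g, p j g * Real.log (f2 j Θ g / p j g))

end FSC

/-!
For fixed `Θ`, Gibbs' inequality bounds the `p`-part `∑_g p_j(g) log(f²_j(Θ, g)/p_j(g))` of `L` by
`log m_j(Θ)`, with equality at `p_j = c_j(Θ)`. Since `log c_j(Θ)(z_j) + log m_j(Θ) = log f²_j(Θ, z_j)`,
this gives `max_p L(p, Θ) = ℓ_w(Θ)`, so `ℓ_w(Θ) = L(c(Θ), Θ) ≤ L(p*, Θ*) ≤ ℓ_w(Θ*)`.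
-/

namespace Real

variable {ι : Type*} [Fintype ι] {f : ι → ℝ}

/-- Gibbs' inequality: terms with `p i = 0` vanish, and on the support of `p` it is Jensen's
inequality for the concave `log`. -/
theorem sum_mul_log_div_le_log_sum {p : ι → ℝ} (hp : ∀ i, 0 ≤ p i) (hp1 : ∑ i, p i = 1)
    (hf : ∀ i, 0 < f i) : ∑ i, p i * log (f i / p i) ≤ log (∑ i, f i) := by
  set s := univ.filter fun i => p i ≠ 0
  have hs1 : ∑ i ∈ s, p i = 1 := by
    rw [sum_filter_ne_zero, hp1]
  have hs : s.Nonempty := nonempty_of_sum_ne_zero (hs1.symm ▸ one_ne_zero)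
  have hsupp : ∑ i, p i * log (f i / p i) = ∑ i ∈ s, p i • log (f i / p i) :=
    (sum_filter_of_ne fun i _ hi => left_ne_zero_of_mul hi).symm
  have hjensen := strictConcaveOn_log_Ioi.concaveOn.le_map_sum (t := s) (w := p)
    (p := fun i => f i / p i) (fun i _ => hp i) hs1
    (fun i hi => div_pos (hf i) ((hp i).lt_of_ne' (mem_filter.mp hi).2))
  have hcancel : ∑ i ∈ s, p i • (f i / p i) = ∑ i ∈ s, f i :=
    sum_congr rfl fun i hi => mul_div_cancel₀ _ (mem_filter.mp hi).2
  calc ∑ i, p i * log (f i / p i) ≤ log (∑ i ∈ s, f i) := by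
        rw [hsupp, ← hcancel]; exact hjensen
    _ ≤ log (∑ i, f i) :=
        log_le_log (sum_pos (fun i _ => hf i) hs)
          (sum_le_sum_of_subset_of_nonneg (subset_univ s) fun i _ _ => (hf i).le)

theorem sum_normalize_mul_log_div_eq_log_sum [Nonempty ι] (hf : ∀ i, 0 < f i) :
    ∑ i, (f i / ∑ j, f j) * log (f i / (f i / ∑ j, f j)) = log (∑ j, f j) := by
  have hS : 0 < ∑ j, f j := sum_pos (fun i _ => hf i) univ_nonempty
  simp_rw [div_div_cancel₀ (hf _).ne']
  rw [← sum_mul, ← sum_div, div_self hS.ne', one_mul]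

end Real

namespace FSC

section

variable {T : Type*} {G n₁ n₂ : ℕ} {f1 : Fin n₁ → T → ℝ} {f2 : Fin n₂ → T → Fin G → ℝ}
  {z : Fin n₂ → Fin G} {lam : ℝ}

theorem marg_pos [Nonempty (Fin G)] (hf2 : ∀ j Θ g, 0 < f2 j Θ g) (j : Fin n₂) (Θ : T) :
    0 < marg f2 j Θ :=
  sum_pos (fun g _ => hf2 j Θ g) univ_nonempty

theorem isProbVec_condP [Nonempty (Fin G)] (hf2 : ∀ j Θ g, 0 < f2 j Θ g) (j : Fin n₂)
    (Θ : T) : IsProbVec (condP f2 j Θ) :=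
  ⟨fun g => (div_pos (hf2 j Θ g) (marg_pos hf2 j Θ)).le,
    by simp only [condP]; rw [← sum_div, ← marg, div_self (marg_pos hf2 j Θ).ne']⟩

theorem Lfun_eq_ellw_add (hf2 : ∀ j Θ g, 0 < f2 j Θ g) (p : Fin n₂ → Fin G → ℝ) (Θ : T) :
    Lfun f1 f2 z lam p Θ = ellw f1 f2 z lam Θ +
      (1 - lam) * ∑ j, (∑ g, p j g * log (f2 j Θ g / p j g) - log (marg f2 j Θ)) := by
  have hlog : ∀ j, log (condP f2 j Θ (z j)) = log (f2 j Θ (z j)) - log (marg f2 j Θ) := by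
    intro j
    have : Nonempty (Fin G) := ⟨z j⟩
    exact log_div (hf2 j Θ (z j)).ne' (marg_pos hf2 j Θ).ne'
  simp only [Lfun, ellw, hlog, sum_add_distrib, sum_sub_distrib]
  ring

theorem Lfun_condP_eq_ellw (hf2 : ∀ j Θ g, 0 < f2 j Θ g) (Θ : T) :
    Lfun f1 f2 z lam (fun j => condP f2 j Θ) Θ = ellw f1 f2 z lam Θ := by
  have hgap : ∀ j, ∑ g, condP f2 j Θ g * log (f2 j Θ g / condP f2 j Θ g) = log (marg f2 j Θ) := by
    intro j
    have : Nonempty (Fin G) := ⟨z j⟩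
    simpa only [condP, marg] using sum_normalize_mul_log_div_eq_log_sum (hf2 j Θ)
  simp [Lfun_eq_ellw_add hf2, hgap]

theorem Lfun_le_ellw (hf2 : ∀ j Θ g, 0 < f2 j Θ g) (hlam : lam ≤ 1)
    {p : Fin n₂ → Fin G → ℝ} (hp : ∀ j, IsProbVec (p j)) (Θ : T) :
    Lfun f1 f2 z lam p Θ ≤ ellw f1 f2 z lam Θ := by
  have hgap : ∀ j, ∑ g, p j g * log (f2 j Θ g / p j g) - log (marg f2 j Θ) ≤ 0 := fun j =>
    sub_nonpos.mpr (sum_mul_log_div_le_log_sum (hp j).1 (hp j).2 (hf2 j Θ))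
  rw [Lfun_eq_ellw_add hf2, add_le_iff_nonpos_right]
  exact mul_nonpos_of_nonneg_of_nonpos (sub_nonneg.mpr hlam) (sum_nonpos fun j _ => hgap j)

end

theorem theorem_one_global_general {T : Type*} (G n₁ n₂ : ℕ)
    (f1 : Fin n₁ → T → ℝ) (f2 : Fin n₂ → T → Fin G → ℝ)
    (hf2 : ∀ j Θ g, 0 < f2 j Θ g)
    (z : Fin n₂ → Fin G) (lam : ℝ) (hlam : lam ∈ Set.Icc (0 : ℝ) 1)
    (pstar : Fin n₂ → Fin G → ℝ) (hpstar : ∀ j, IsProbVec (pstar j)) (Θstar : T)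
    (hmax : ∀ (p : Fin n₂ → Fin G → ℝ), (∀ j, IsProbVec (p j)) → ∀ Θ : T,
      Lfun f1 f2 z lam p Θ ≤ Lfun f1 f2 z lam pstar Θstar) :
    ∀ Θ : T, ellw f1 f2 z lam Θ ≤ ellw f1 f2 z lam Θstar := by
  intro Θ
  have hcondP : ∀ j, IsProbVec (condP f2 j Θ) := fun j =>
    have : Nonempty (Fin G) := ⟨z j⟩
    isProbVec_condP hf2 j Θ
  calc ellw f1 f2 z lam Θ = Lfun f1 f2 z lam (fun j => condP f2 j Θ) Θ :=
        (Lfun_condP_eq_ellw hf2 Θ).symm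
    _ ≤ Lfun f1 f2 z lam pstar Θstar := hmax _ hcondP Θ
    _ ≤ ellw f1 f2 z lam Θstar := Lfun_le_ellw hf2 hlam.2 hpstar Θstar

/-- **Theorem 1 (global case).**  If `(p*_1,…,p*_{n₂}, Θ*)` is a global maximum of `L`,
then `Θ*` is a global maximum of the weighted log-likelihood `ℓ_w`. -/
theorem theorem_one_global {T : Type*} (G n₁ n₂ : ℕ) (hG : 1 ≤ G) (hn₂ : 1 ≤ n₂)
    (f1 : Fin n₁ → T → ℝ) (f2 : Fin n₂ → T → Fin G → ℝ)
    (hf1 : ∀ j Θ, 0 < f1 j Θ) (hf2 : ∀ j Θ g, 0 < f2 j Θ g)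
    (z : Fin n₂ → Fin G) (lam : ℝ) (hlam : lam ∈ Set.Icc (0 : ℝ) 1)
    (pstar : Fin n₂ → Fin G → ℝ) (hpstar : ∀ j, IsProbVec (pstar j)) (Θstar : T)
    (hmax : ∀ (p : Fin n₂ → Fin G → ℝ), (∀ j, IsProbVec (p j)) → ∀ Θ : T,
      Lfun f1 f2 z lam p Θ ≤ Lfun f1 f2 z lam pstar Θstar) :
    ∀ Θ : T, ellw f1 f2 z lam Θ ≤ ellw f1 f2 z lam Θstar :=
  theorem_one_global_general G n₁ n₂ f1 f2 hf2 z lam hlam pstar hpstar Θstar hmax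

end FSC
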